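/- The create_ahdr construction is the inverse of the chain of per-hop header processing steps: let s_0, …, s_{l−1} ∈ {0,1}^k and FS_0, …, FS_{l−1} ∈ {0,1}^{|FS|}, and let (FS_i, γ_i, β_i), 0 ≤ i ≤ l−1, be produced by the create_ahdr construction. Then (a) for every 0 ≤ i ≤ l−1 the MAC verification performed by node i succeeds, i.e., γ_i = MAC(h_MAC(s_i); FS_i ‖ β_i); and (b) for every 0 ≤ i ≤ l−2, the per-hop processing of the header at node i yields exactly the header constructed for node i+1, i.e., (β_i ‖ 0^c) ⊕ PRG2(h_PRG2(s_i)) = FS_{i+1} ‖ γ_{i+1} ‖ β_{i+1}. -/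

import Mathlib

/-- Bit strings: finite sequences of bits. -/
abbrev BS : Type := List Bool

/-- Bitwise XOR of (equal-length) bit strings. -/
def bxor (σ τ : BS) : BS := List.zipWith xor σ τ

/-- Substring from bit position `a` through `b` inclusive (0-indexed). -/
def substr (σ : BS) (a b : ℕ) : BS := (σ.drop a).take (b + 1 - a)

/-- All-zero string of length `a`. -/
def zeros (a : ℕ) : BS := List.replicate a false

/-!
XOR against the same pad is an involution, so processing at node `i` decrypts `β i` back to the
first `(r - 1) c` bits of the next header `FS (i+1) ‖ γ (i+1) ‖ β (i+1)`; what remains is that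
the `c` zero bits appended during processing, once XORed with the pad, reproduce the last `c` bits
of `β (i+1)`. By downward induction on `j`, the last `j c` bits of `β j` are the padding `φ j`:
the recursion for `φ` is designed so that encrypting `β (j+1)` under pad `j` turns its tail
`φ (j+1)` into `φ j ‖ 0^c`. In particular the last `c` bits of the encrypted next header are zero,
which is exactly what the processing step needs.
-/

@[simp]
lemma length_bxor (x y : BS) : (bxor x y).length = min x.length y.length :=
  List.length_zipWith

@[simp]
lemma length_zeros (n : ℕ) : (zeros n).length = n :=
  List.length_replicate

lemma drop_bxor (x y : BS) (n : ℕ) : (bxor x y).drop n = bxor (x.drop n) (y.drop n) :=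
  List.drop_zipWith

lemma take_bxor (x y : BS) (n : ℕ) : (bxor x y).take n = bxor (x.take n) (y.take n) :=
  List.take_zipWith

lemma bxor_take_length (x y : BS) : bxor (x.take y.length) y = bxor x y := by
  conv_rhs => rw [← List.take_of_length_le (l := bxor x y) (i := y.length) (by simp), take_bxor,
    List.take_length]

lemma bxor_bxor_cancel_right {x y : BS} (h : x.length ≤ y.length) : bxor (bxor x y) y = x :=
  List.ext_getElem (by simp; omega) (by simp [bxor])

lemma substr_eq_drop {σ : BS} {b : ℕ} (a : ℕ) (h : σ.length ≤ b + 1) : substr σ a b = σ.drop a :=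
  List.take_of_length_le (by simp; omega)

lemma substr_zero_sub_one {σ : BS} {n : ℕ} (hn : 0 < n) : substr σ 0 (n - 1) = σ.take n := by
  simp only [substr, List.drop_zero]
  congr 1
  omega

/- For `n = 1` the left substring is `take 1 b` rather than empty (truncated subtraction); the
extra bit is harmless because `bxor` truncates to the shorter operand. -/
lemma bxor_append_substr_eq_take {h b p : BS} {c n : ℕ} (hc : 0 < c) (hn : 1 ≤ n)
    (hh : h.length = c) (hp : n * c ≤ p.length) :
    bxor (h ++ substr b 0 ((n - 1) * c - 1)) (substr p 0 (n * c - 1))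
      = (bxor (h ++ b) p).take (n * c) := by
  have hnc : (n - 1) * c + c = n * c := by rw [← add_one_mul]; congr 1; omega
  rw [substr_zero_sub_one (Nat.mul_pos (by omega : 0 < n) hc), take_bxor,
    ← bxor_take_length _ (p.take _), List.length_take, min_eq_left hp, List.take_append,
    List.take_append, hh]
  simp only [substr, List.drop_zero, List.take_take]
  congr 3
  omega

lemma drop_bxor_append_of_drop_eq {h b φ p : BS} {c a : ℕ} (hh : h.length = c)
    (hb : b.drop a = bxor (φ ++ zeros c) (p.drop (c + a)))
    (hp : φ.length + c ≤ p.length - (c + a)) :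
    (bxor (h ++ b) p).drop (c + a) = φ ++ zeros c := by
  rw [drop_bxor, ← List.drop_drop, List.drop_left' hh, hb, bxor_bxor_cancel_right (by simpa)]

lemma bxor_take_append_zeros_of_drop_eq {x p : BS} {m n : ℕ} (hx : x.length ≤ p.length)
    (htail : (bxor x p).drop m = zeros n) : bxor ((bxor x p).take m ++ zeros n) p = x := by
  rw [← htail, List.take_append_drop, bxor_bxor_cancel_right hx]

section HeaderChain

variable {c r l : ℕ} {P φ β H : ℕ → BS}

lemma length_padding (hP : ∀ i, (P i).length = r * c) (hlr : l ≤ r) (hφ0 : φ 0 = [])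
    (hφ : ∀ i, i + 1 < l → φ (i + 1) = bxor (φ i ++ zeros c) ((P i).drop ((r - 1 - i) * c))) :
    ∀ j < l, (φ j).length = j * c
  | 0, _ => by simp [hφ0]
  | j + 1, hj => by
    have hdrop : r * c - (r - 1 - j) * c = (j + 1) * c := by
      rw [← Nat.sub_mul]; congr 1; omega
    rw [hφ j hj, length_bxor, List.length_append, length_padding hP hlr hφ0 hφ j (by omega),
      length_zeros, List.length_drop, hP, hdrop, add_one_mul, min_self]

lemma drop_bxor_next_header (hP : ∀ i, (P i).length = r * c) (hH : ∀ i < l, (H i).length = c)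
    (hlr : l ≤ r)
    (hφ : ∀ i, i + 1 < l → φ (i + 1) = bxor (φ i ++ zeros c) ((P i).drop ((r - 1 - i) * c)))
    (hφlen : ∀ i < l, (φ i).length = i * c) {j : ℕ} (hj : j + 1 < l)
    (hβ : (β (j + 1)).drop ((r - 1 - (j + 1)) * c) = φ (j + 1)) :
    (bxor (H (j + 1) ++ β (j + 1)) (P j)).drop ((r - 1 - j) * c) = φ j ++ zeros c := by
  have hsplit : (r - 1 - j) * c = c + (r - 1 - (j + 1)) * c := by
    rw [← one_add_mul]; congr 1; omega
  have hdrop : r * c - (r - 1 - j) * c = j * c + c := by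
    rw [← Nat.sub_mul, ← add_one_mul]; congr 1; omega
  rw [hsplit]
  refine drop_bxor_append_of_drop_eq (hH _ hj) ?_ ?_
  · rw [hβ, hφ j hj, hsplit]
  · rw [hP, ← hsplit, hdrop, hφlen j (by omega)]

lemma length_header_and_drop_eq_padding (hP : ∀ i, (P i).length = r * c)
    (hH : ∀ i < l, (H i).length = c) (hlr : l ≤ r)
    (hφ : ∀ i, i + 1 < l → φ (i + 1) = bxor (φ i ++ zeros c) ((P i).drop ((r - 1 - i) * c)))
    (hφlen : ∀ i < l, (φ i).length = i * c) {ρ : BS} (hρ : ρ.length = (r - l) * c)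
    (hβlast : β (l - 1) = ρ ++ φ (l - 1))
    (hβ : ∀ i, i + 1 < l → β i = (bxor (H (i + 1) ++ β (i + 1)) (P i)).take ((r - 1) * c)) :
    ∀ j < l, (β j).length = (r - 1) * c ∧ (β j).drop ((r - 1 - j) * c) = φ j := by
  intro j hj
  have hl : 0 < l := by omega
  have hjl : j ≤ l - 1 := by omega
  clear hj
  induction hjl using Nat.decreasingInduction with
  | self =>
    have hlen : (r - l) * c + (l - 1) * c = (r - 1) * c := by
      rw [← Nat.add_mul]; congr 1; omega
    rw [hβlast, List.length_append, hρ, hφlen _ (by omega), hlen,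
      show r - 1 - (l - 1) = r - l by omega, List.drop_left' hρ]
    exact ⟨rfl, rfl⟩
  | of_succ j hjl ih =>
    obtain ⟨hlen, hdrop⟩ := ih
    have hcr : c + (r - 1) * c = r * c := by rw [← one_add_mul]; congr 1; omega
    have hsub : (r - 1) * c - (r - 1 - j) * c = j * c := by
      rw [← Nat.sub_mul]; congr 1; omega
    rw [hβ j (by omega), List.length_take, length_bxor, List.length_append, hH _ (by omega), hlen,
      hP, hcr, min_self, List.drop_take, drop_bxor_next_header hP hH hlr hφ hφlen (by omega) hdrop,
      hsub, List.take_left' (hφlen j (by omega))]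
    exact ⟨min_eq_left (Nat.mul_le_mul_right _ (Nat.sub_le _ _)), rfl⟩

lemma processing_eq_next_header (hP : ∀ i, (P i).length = r * c)
    (hH : ∀ i < l, (H i).length = c) (hlr : l ≤ r)
    (hφ : ∀ i, i + 1 < l → φ (i + 1) = bxor (φ i ++ zeros c) ((P i).drop ((r - 1 - i) * c)))
    (hφlen : ∀ i < l, (φ i).length = i * c) {ρ : BS} (hρ : ρ.length = (r - l) * c)
    (hβlast : β (l - 1) = ρ ++ φ (l - 1))
    (hβ : ∀ i, i + 1 < l → β i = (bxor (H (i + 1) ++ β (i + 1)) (P i)).take ((r - 1) * c))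
    {i : ℕ} (hi : i + 1 < l) :
    bxor (β i ++ zeros c) (P i) = H (i + 1) ++ β (i + 1) := by
  have hnext := length_header_and_drop_eq_padding hP hH hlr hφ hφlen hρ hβlast hβ (i + 1) hi
  have hsplit : (r - 1) * c = (r - 1 - i) * c + i * c := by
    rw [← Nat.add_mul]; congr 1; omega
  have hcr : c + (r - 1) * c = r * c := by rw [← one_add_mul]; congr 1; omega
  have htail : (bxor (H (i + 1) ++ β (i + 1)) (P i)).drop ((r - 1) * c) = zeros c := by
    rw [hsplit, ← List.drop_drop, drop_bxor_next_header hP hH hlr hφ hφlen hi hnext.2,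
      List.drop_left' (hφlen i (by omega))]
  rw [hβ i hi]
  exact bxor_take_append_zeros_of_drop_eq
    (by rw [List.length_append, hH _ hi, hnext.1, hP, hcr]) htail

end HeaderChain

theorem create_ahdr_inverse_of_processing_general
    (k fsl r l : ℕ) (hk : 1 ≤ k)
    (hlr : l ≤ r)
    (c : ℕ) (hc : c = fsl + k)
    (PRG2 : BS → BS) (hPRG2len : ∀ x, (PRG2 x).length = r * c)
    (MAC : BS → BS → BS) (hMAClen : ∀ key msg, (MAC key msg).length = k)
    (hPRG2 hMAC : BS → BS)
    (s FS : ℕ → BS)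
    (hFS : ∀ i, i < l → (FS i).length = fsl)
    (φ β γ : ℕ → BS)
    (hφ0 : φ 0 = [])
    (hφ : ∀ i, i + 1 < l → φ (i + 1) =
      bxor (φ i ++ zeros c) (substr (PRG2 (hPRG2 (s i))) ((r - 1 - i) * c) (r * c - 1)))
    (ρ : BS) (hρ : ρ.length = (r - l) * c)
    (hβlast : β (l - 1) = ρ ++ φ (l - 1))
    (hγlast : γ (l - 1) = MAC (hMAC (s (l - 1))) (FS (l - 1) ++ β (l - 1)))
    (hβ : ∀ i, i + 1 < l → β i =
      bxor (FS (i + 1) ++ γ (i + 1) ++ substr (β (i + 1)) 0 ((r - 2) * c - 1))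
           (substr (PRG2 (hPRG2 (s i))) 0 ((r - 1) * c - 1)))
    (hγ : ∀ i, i + 1 < l → γ i = MAC (hMAC (s i)) (FS i ++ β i)) :
    (∀ i, i < l → γ i = MAC (hMAC (s i)) (FS i ++ β i)) ∧
      (∀ i, i + 1 < l →
        bxor (β i ++ zeros c) (PRG2 (hPRG2 (s i)))
          = FS (i + 1) ++ γ (i + 1) ++ β (i + 1)) := by
  have hγall : ∀ i, i < l → γ i = MAC (hMAC (s i)) (FS i ++ β i) := fun i hi => by
    by_cases h : i + 1 < l
    · exact hγ i h
    · obtain rfl : i = l - 1 := by omega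
      exact hγlast
  have hH : ∀ i < l, (FS i ++ γ i).length = c := fun i hi => by
    rw [List.length_append, hFS i hi, hγall i hi, hMAClen, hc]
  have hP : ∀ i, (PRG2 (hPRG2 (s i))).length = r * c := fun i => hPRG2len _
  have hφ' : ∀ i, i + 1 < l → φ (i + 1) =
      bxor (φ i ++ zeros c) ((PRG2 (hPRG2 (s i))).drop ((r - 1 - i) * c)) := fun i hi => by
    rw [hφ i hi, substr_eq_drop _ (by rw [hP]; omega)]
  have hβ' : ∀ i, i + 1 < l → β i = (bxor (FS (i + 1) ++ γ (i + 1) ++ β (i + 1))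
      (PRG2 (hPRG2 (s i)))).take ((r - 1) * c) := fun i hi => by
    rw [hβ i hi, show r - 2 = r - 1 - 1 by omega]
    exact bxor_append_substr_eq_take (by omega) (by omega) (hH _ hi)
      (by rw [hP]; exact Nat.mul_le_mul_right _ (Nat.sub_le _ _))
  have hφlen := length_padding hP hlr hφ0 hφ'
  exact ⟨hγall, fun i hi => processing_eq_next_header hP hH hlr hφ' hφlen hρ hβlast hβ' hi⟩

/-- `create_ahdr` is the inverse of the chain of per-hop header
processing steps: (a) every per-hop MAC verification succeeds, and (b) the
per-hop processing `(β i ‖ 0^c) ⊕ PRG2(h_PRG2(s i))` of the header at node `i`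
yields exactly the header `FS (i+1) ‖ γ (i+1) ‖ β (i+1)` constructed for node
`i+1`. -/
theorem create_ahdr_inverse_of_processing
    (k fsl r l : ℕ) (hk : 1 ≤ k) (hfsl : k ≤ fsl) (hr : 1 ≤ r)
    (hl1 : 1 ≤ l) (hlr : l ≤ r)
    (c : ℕ) (hc : c = fsl + k)
    (PRG2 : BS → BS) (hPRG2len : ∀ x, (PRG2 x).length = r * c)
    (MAC : BS → BS → BS) (hMAClen : ∀ key msg, (MAC key msg).length = k)
    (hPRG2 hMAC : BS → BS)
    (hhPRG2len : ∀ x, (hPRG2 x).length = k) (hhMAClen : ∀ x, (hMAC x).length = k)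
    (s FS : ℕ → BS)
    (hs : ∀ i, i < l → (s i).length = k)
    (hFS : ∀ i, i < l → (FS i).length = fsl)
    (φ β γ : ℕ → BS)
    (hφ0 : φ 0 = [])
    (hφ : ∀ i, i + 1 < l → φ (i + 1) =
      bxor (φ i ++ zeros c) (substr (PRG2 (hPRG2 (s i))) ((r - 1 - i) * c) (r * c - 1)))
    (ρ : BS) (hρ : ρ.length = (r - l) * c)
    (hβlast : β (l - 1) = ρ ++ φ (l - 1))
    (hγlast : γ (l - 1) = MAC (hMAC (s (l - 1))) (FS (l - 1) ++ β (l - 1)))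
    (hβ : ∀ i, i + 1 < l → β i =
      bxor (FS (i + 1) ++ γ (i + 1) ++ substr (β (i + 1)) 0 ((r - 2) * c - 1))
           (substr (PRG2 (hPRG2 (s i))) 0 ((r - 1) * c - 1)))
    (hγ : ∀ i, i + 1 < l → γ i = MAC (hMAC (s i)) (FS i ++ β i)) :
    (∀ i, i < l → γ i = MAC (hMAC (s i)) (FS i ++ β i)) ∧
      (∀ i, i + 1 < l →
        bxor (β i ++ zeros c) (PRG2 (hPRG2 (s i)))
          = FS (i + 1) ++ γ (i + 1) ++ β (i + 1)) :=
  create_ahdr_inverse_of_processing_general k fsl r l hk hlr c hc PRG2 hPRG2len MAC hMAClen hPRG2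
    hMAC s FS hFS φ β γ hφ0 hφ ρ hρ hβlast hγlast hβ hγ
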